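/- Let Q ∈ R[x] with Q(0) invertible and deg Q = d, and define V ∈ R[x] by V(x²) = Q(x)Q(-x). Write 1/Q = Σ a_i x^i and 1/V = Σ b_i x^i. Then for all N ≥ 2d-1: the window (a_{N-d+1}, ..., a_N) is determined by (a_N, ..., a_{N-d+1}) = coefficients d through 2d-1 of the product Q(-x)·S(x), where S(x) = x·W(x²) if N is even and S(x) = W(x²) if N is odd, with W(x) = Σ_{i=0}^{d-1} b_{⌊N/2⌋-d+1+i} x^i. -/

import Mathlib

/-!
Since `Q(x) Q(-x) = V(x²)`, the inverse of `Q` is `Q(-x) · B(x²)`. As `Q(-x)` has degree at most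
`d`, the coefficients `N - d + 1, …, N` of this product only see the coefficients
`N - 2d + 1, …, N` of `B(x²)`, and these are the coefficients `0, …, 2d - 1` of `S`: the factor
`x` for even `N` realigns the parity of the even-supported series `B(x²)`.
-/

open Polynomial PowerSeries

section

variable {R : Type*} [CommRing R]

namespace PowerSeries

theorem expand_coe (p : ℕ) (hp : p ≠ 0) (P : R[X]) :
    expand p hp (P : R⟦X⟧) = (Polynomial.expand R p P : R⟦X⟧) := by
  ext n
  simp only [coeff_expand, Polynomial.coeff_coe, Polynomial.coeff_expand (Nat.pos_of_ne_zero hp)]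

theorem eq_mul_expand_of_mul_eq_one {Q Q' V : R[X]} {A B : R⟦X⟧} (p : ℕ) (hp : p ≠ 0)
    (hV : Q * Q' = V.comp (Polynomial.X ^ p)) (hA : (Q : R⟦X⟧) * A = 1)
    (hB : (V : R⟦X⟧) * B = 1) :
    A = (Q' : R⟦X⟧) * expand p hp B := by
  have hQ : (Q : R⟦X⟧) * ((Q' : R⟦X⟧) * expand p hp B) = 1 := by
    rw [← mul_assoc, ← Polynomial.coe_mul, hV, ← expand_eq_comp_X_pow, ← expand_coe p hp,
      ← map_mul, hB, map_one]
  calc A = A * ((Q : R⟦X⟧) * ((Q' : R⟦X⟧) * expand p hp B)) := by rw [hQ, mul_one]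
    _ = (Q : R⟦X⟧) * A * ((Q' : R⟦X⟧) * expand p hp B) := by ring
    _ = (Q' : R⟦X⟧) * expand p hp B := by rw [hA, one_mul]

theorem coeff_coe_mul_eq_sum (P : R[X]) (f : R⟦X⟧) {n : ℕ} (hP : P.natDegree ≤ n) (m : ℕ)
    (hnm : n ≤ m) :
    coeff m ((P : R⟦X⟧) * f) = ∑ k ∈ Finset.range (n + 1), P.coeff k * coeff (m - k) f := by
  rw [coeff_mul, Finset.Nat.sum_antidiagonal_eq_sum_range_succ
    (fun a b => coeff a (P : R⟦X⟧) * coeff b f)]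
  simp only [Polynomial.coeff_coe]
  refine (Finset.sum_subset (Finset.range_subset_range.mpr (by omega)) fun k _ hk => ?_).symm
  rw [Polynomial.coeff_eq_zero_of_natDegree_lt (by simp at hk; omega), zero_mul]

theorem coeff_coe_mul_add_of_coeff_eq {P : R[X]} {f g : R⟦X⟧} {n s : ℕ} (hP : P.natDegree ≤ n)
    (hfg : ∀ t ≤ n, coeff t g = coeff (t + s) f) :
    coeff (n + s) ((P : R⟦X⟧) * f) = coeff n ((P : R⟦X⟧) * g) := by
  rw [coeff_coe_mul_eq_sum P f hP _ (by omega), coeff_coe_mul_eq_sum P g hP _ le_rfl]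
  refine Finset.sum_congr rfl fun k hk => ?_
  rw [hfg _ (Nat.sub_le n k), Nat.sub_add_comm (by simpa [Nat.lt_succ_iff] using hk)]

end PowerSeries

namespace Polynomial

theorem coeff_sum_range_C_mul_X_pow (β : ℕ → R) (d t : ℕ) :
    (∑ j ∈ Finset.range d, Polynomial.C (β j) * Polynomial.X ^ j).coeff t =
      if t < d then β t else 0 := by
  simp only [Polynomial.finsetSum_coeff, Polynomial.coeff_C_mul_X_pow]
  simp [Finset.mem_range]

theorem coeff_X_pow_mul_expand_window (B : R⟦X⟧) {c d e t : ℕ} (he : e ≤ 1) (hec : e ≤ 2 * c)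
    (ht : t < 2 * d + e) :
    (Polynomial.X ^ e * Polynomial.expand R 2
        (∑ j ∈ Finset.range d,
          Polynomial.C (PowerSeries.coeff (c + j) B) * Polynomial.X ^ j)).coeff t =
      PowerSeries.coeff (t + (2 * c - e)) (PowerSeries.expand 2 two_ne_zero B) := by
  rw [Polynomial.coeff_X_pow_mul', PowerSeries.coeff_expand]
  by_cases het : e ≤ t
  · rw [if_pos het, Polynomial.coeff_expand two_pos, Polynomial.coeff_sum_range_C_mul_X_pow]
    by_cases hpar : 2 ∣ t - e
    · rw [if_pos hpar, if_pos (by omega), if_pos (by omega),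
        show c + (t - e) / 2 = (t + (2 * c - e)) / 2 by omega]
    · rw [if_neg hpar, if_neg (by omega)]
  · rw [if_neg het, if_neg (by omega)]

end Polynomial

end

theorem stmt_18_general {R : Type*} [CommRing R] (Q V : Polynomial R) (d N : ℕ)
    (hdeg : Q.natDegree = d)
    (hV : Q * Q.comp (-Polynomial.X) = V.comp (Polynomial.X ^ 2))
    (A B : PowerSeries R)
    (hA : (Q : PowerSeries R) * A = 1) (hB : (V : PowerSeries R) * B = 1)
    (hN : 2 * d - 1 ≤ N) :
    ∀ i < d,
      PowerSeries.coeff (N + 1 - d + i) A =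
        (Q.comp (-Polynomial.X) *
          (if Even N then
              Polynomial.X *
                (∑ j ∈ Finset.range d,
                  Polynomial.C (PowerSeries.coeff (N / 2 + 1 - d + j) B)
                    * Polynomial.X ^ j).comp (Polynomial.X ^ 2)
            else
              (∑ j ∈ Finset.range d,
                Polynomial.C (PowerSeries.coeff (N / 2 + 1 - d + j) B)
                  * Polynomial.X ^ j).comp (Polynomial.X ^ 2))).coeff (d + i) := by
  intro i hi
  set W : R[X] :=
    ∑ j ∈ Finset.range d, Polynomial.C (PowerSeries.coeff (N / 2 + 1 - d + j) B) * Polynomial.X ^ j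
  have hS : (if Even N then Polynomial.X * W.comp (Polynomial.X ^ 2)
      else W.comp (Polynomial.X ^ 2)) = Polynomial.X ^ ((N + 1) % 2) * Polynomial.expand R 2 W := by
    rw [Polynomial.expand_eq_comp_X_pow]
    split_ifs with hEven
    · rw [show (N + 1) % 2 = 1 by have := Nat.even_iff.mp hEven; omega, pow_one]
    · rw [show (N + 1) % 2 = 0 by have := Nat.not_even_iff.mp hEven; omega, pow_zero, one_mul]
  have hPdeg : (Q.comp (-Polynomial.X)).natDegree ≤ d + i :=
    calc _ ≤ Q.natDegree * (-Polynomial.X : R[X]).natDegree := Polynomial.natDegree_comp_le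
      _ ≤ d := hdeg ▸ mul_le_of_le_one_right (Nat.zero_le _)
          ((Polynomial.natDegree_neg _).trans_le Polynomial.natDegree_X_le)
      _ ≤ d + i := Nat.le_add_right d i
  rw [hS, ← Polynomial.coeff_coe, Polynomial.coe_mul,
    PowerSeries.eq_mul_expand_of_mul_eq_one 2 two_ne_zero hV hA hB,
    show N + 1 - d + i = d + i + (2 * (N / 2 + 1 - d) - (N + 1) % 2) by omega]
  refine PowerSeries.coeff_coe_mul_add_of_coeff_eq hPdeg fun t ht => ?_
  rw [Polynomial.coeff_coe]
  exact Polynomial.coeff_X_pow_mul_expand_window B (by omega) (by omega) (by omega)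

theorem stmt_18 {R : Type*} [CommRing R] (Q V : Polynomial R) (d N : ℕ)
    (hd : 1 ≤ d) (hdeg : Q.natDegree = d) (hQ0 : IsUnit (Q.coeff 0))
    (hV : Q * Q.comp (-Polynomial.X) = V.comp (Polynomial.X ^ 2))
    (A B : PowerSeries R)
    (hA : (Q : PowerSeries R) * A = 1) (hB : (V : PowerSeries R) * B = 1)
    (hN : 2 * d - 1 ≤ N) :
    ∀ i < d,
      PowerSeries.coeff (N + 1 - d + i) A =
        (Q.comp (-Polynomial.X) *
          (if Even N then
              Polynomial.X *
                (∑ j ∈ Finset.range d,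
                  Polynomial.C (PowerSeries.coeff (N / 2 + 1 - d + j) B)
                    * Polynomial.X ^ j).comp (Polynomial.X ^ 2)
            else
              (∑ j ∈ Finset.range d,
                Polynomial.C (PowerSeries.coeff (N / 2 + 1 - d + j) B)
                  * Polynomial.X ^ j).comp (Polynomial.X ^ 2))).coeff (d + i) :=
  stmt_18_general Q V d N hdeg hV A B hA hB hN
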